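/- For every multigraph G (possibly with loops) and every valid pair of functions (g,h), the (g,h)-oriented chromatic index satisfies χ'_{(g,h)}(G) = max{Δ_{(g,h)}(G), W_{(g,h)}(G)}. -/

import Mathlib

open Classical

noncomputable section

namespace MG

variable {V : Type} {E : Type} [Fintype V] [Fintype E] [DecidableEq V]

/-- The number of times vertex `v` occurs as an endpoint of the unordered pair `s`
(so a loop at `v` counts twice). -/
def mult (v : V) (s : Sym2 V) : ℕ :=
  Sym2.lift ⟨fun a b => (if a = v then 1 else 0) + (if b = v then 1 else 0),
    fun _ _ => add_comm _ _⟩ s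

/-- The degree of a vertex in the multigraph whose edges `E` have endpoints given
by `ends` (loops count twice). -/
def degree (ends : E → Sym2 V) (v : V) : ℕ := ∑ e : E, mult v (ends e)

/-- Maximum degree `Δ(G)`. -/
def maxDegree (ends : E → Sym2 V) : ℕ := Finset.univ.sup fun v => degree ends v

/-- `e(S)`: the number of edges with all endpoints in `S`. -/
def edgesWithin (ends : E → Sym2 V) (S : Finset V) : ℕ :=
  (Finset.univ.filter fun e => ∀ v ∈ ends e, v ∈ S).card

/-- The degree of `v` in the subgraph induced by `S`. -/
def degreeIn (ends : E → Sym2 V) (S : Finset V) (v : V) : ℕ :=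
  ∑ e ∈ Finset.univ.filter (fun e => ∀ u ∈ ends e, u ∈ S), mult v (ends e)

/-- Adjacency; a vertex with a loop is adjacent to itself. -/
def Adj (ends : E → Sym2 V) (u v : V) : Prop := ∃ e, ends e = s(u, v)

/-- The multigraph has no loops. -/
def Loopless (ends : E → Sym2 V) : Prop := ∀ e, ¬ (ends e).IsDiag

/-- Reachability by walks. -/
def Reaches (ends : E → Sym2 V) (u v : V) : Prop :=
  Relation.ReflTransGen (Adj ends) u v

/-- The connected component of `v`, as a set of vertices. -/
def component (ends : E → Sym2 V) (v : V) : Finset V :=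
  Finset.univ.filter fun u => Reaches ends v u

/-- A pseudoforest: every connected component contains at most one cycle
(a loop counts as a cycle); equivalently, every connected component has at
most as many edges as vertices. -/
def IsPseudoforest (ends : E → Sym2 V) : Prop :=
  ∀ v : V, edgesWithin ends (component ends v) ≤ (component ends v).card

/-- A forest (acyclic multigraph): every connected component has strictly fewer
edges than vertices. -/
def IsForest (ends : E → Sym2 V) : Prop :=
  ∀ v : V, edgesWithin ends (component ends v) + 1 ≤ (component ends v).card

/-- An orientation assigns to each edge an ordered pair of its endpoints
(tail, head). -/
def IsOrientation (ends : E → Sym2 V) (D : E → V × V) : Prop :=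
  ∀ e, s((D e).1, (D e).2) = ends e

/-- Indegree of `v` under the orientation `D`. -/
def inDeg (D : E → V × V) (v : V) : ℕ := (Finset.univ.filter fun e => (D e).2 = v).card

/-- Outdegree of `v` under the orientation `D`. -/
def outDeg (D : E → V × V) (v : V) : ℕ := (Finset.univ.filter fun e => (D e).1 = v).card

/-- `G` is `(g,h)`-orientable: there is an orientation in which every vertex `v`
has indegree at most `g v` and outdegree at most `h v`. -/
def GHOrientable (ends : E → Sym2 V) (g h : V → ℕ∞) : Prop :=
  ∃ D : E → V × V, IsOrientation ends D ∧
    (∀ v, (inDeg D v : ℕ∞) ≤ g v) ∧ (∀ v, (outDeg D v : ℕ∞) ≤ h v)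

/-- `(g,h)` is a valid pair of functions for `G`. -/
def ValidPair (ends : E → Sym2 V) (g h : V → ℕ∞) : Prop :=
  (∀ v : V, 1 ≤ g v + h v) ∧
  (∀ u v : V, Adj ends u v → 1 ≤ g u + g v) ∧
  (∀ u v : V, Adj ends u v → 1 ≤ h u + h v)

/-- The endpoint map of the subgraph consisting of the edges satisfying `P`. -/
def subEnds (ends : E → Sym2 V) (P : E → Prop) : {e // P e} → Sym2 V :=
  fun e => ends e.val

/-- A `(g,h)`-oriented-coloring: each color class is a `(g,h)`-orientable subgraph. -/
def GHColoring (ends : E → Sym2 V) (g h : V → ℕ∞) {k : ℕ} (C : E → Fin k) : Prop :=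
  ∀ c : Fin k, GHOrientable (subEnds ends fun e => C e = c) g h

/-- The `(g,h)`-oriented chromatic index `χ'_{(g,h)}(G)`. -/
def ghChromaticIndex (ends : E → Sym2 V) (g h : V → ℕ∞) : ℕ :=
  sInf {k | ∃ C : E → Fin k, GHColoring ends g h C}

/-- Ceiling division `⌈a/b⌉` on ℕ. -/
def cdiv (a b : ℕ) : ℕ := (a + b - 1) / b

/-- Replace `∞` values of `g` by the maximum degree `Δ(G)`. -/
def trunc (ends : E → Sym2 V) (g : V → ℕ∞) (v : V) : ℕ :=
  WithTop.untopD (maxDegree ends) (g v)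

/-- The weighted maximum degree `Δ_{(g,h)}(G) = max_v ⌈d(v)/(g(v)+h(v))⌉`
(values `∞` of `g, h` replaced by `Δ(G)`). -/
def ghMaxDegree (ends : E → Sym2 V) (g h : V → ℕ∞) : ℕ :=
  Finset.univ.sup fun v => cdiv (degree ends v) (trunc ends g v + trunc ends h v)

/-- The weighted maximum density
`W_{(g,h)}(G) = max_{S, g(S) ≥ 1, h(S) ≥ 1} ⌈e(S)/min{g(S),h(S)}⌉`
(values `∞` of `g, h` replaced by `Δ(G)`). -/
def ghMaxDensity (ends : E → Sym2 V) (g h : V → ℕ∞) : ℕ :=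
  (Finset.univ.filter fun S : Finset V =>
      (1 ≤ ∑ v ∈ S, g v) ∧ (1 ≤ ∑ v ∈ S, h v)).sup
    fun S => cdiv (edgesWithin ends S)
      (min (∑ v ∈ S, trunc ends g v) (∑ v ∈ S, trunc ends h v))

/-- An edge-coloring into pseudoforests. -/
def PaColoring (ends : E → Sym2 V) {k : ℕ} (C : E → Fin k) : Prop :=
  ∀ c : Fin k, IsPseudoforest (subEnds ends fun e => C e = c)

/-- The pseudoarboricity `pa(G)`. -/
def pa (ends : E → Sym2 V) : ℕ := sInf {k | ∃ C : E → Fin k, PaColoring ends C}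

/-- An edge-coloring into degree-`f` pseudoforests. -/
def PafColoring (ends : E → Sym2 V) (f : V → ℕ) {k : ℕ} (C : E → Fin k) : Prop :=
  ∀ c : Fin k, IsPseudoforest (subEnds ends fun e => C e = c) ∧
    ∀ v, degree (subEnds ends fun e => C e = c) v ≤ f v

/-- The degree-`f` pseudoarboricity `pa_f(G)`. -/
def paf (ends : E → Sym2 V) (f : V → ℕ) : ℕ :=
  sInf {k | ∃ C : E → Fin k, PafColoring ends f C}

/-- The weighted maximum degree `Δ_f(G) = max_v ⌈d(v)/f(v)⌉`. -/
def fMaxDegree (ends : E → Sym2 V) (f : V → ℕ) : ℕ :=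
  Finset.univ.sup fun v => cdiv (degree ends v) (f v)

/-- An edge-coloring into degree-`f` forests. -/
def AfColoring (ends : E → Sym2 V) (f : V → ℕ) {k : ℕ} (C : E → Fin k) : Prop :=
  ∀ c : Fin k, IsForest (subEnds ends fun e => C e = c) ∧
    ∀ v, degree (subEnds ends fun e => C e = c) v ≤ f v

/-- The degree-`f` arboricity `a_f(G)`. -/
def af (ends : E → Sym2 V) (f : V → ℕ) : ℕ :=
  sInf {k | ∃ C : E → Fin k, AfColoring ends f C}

/-- The arboricity `a(G)`. -/
def arboricity (ends : E → Sym2 V) : ℕ :=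
  sInf {k | ∃ C : E → Fin k, ∀ c : Fin k, IsForest (subEnds ends fun e => C e = c)}

/-- The linear arboricity `la(G)`: color classes are linear forests, i.e.
degree-2 forests. -/
def la (ends : E → Sym2 V) : ℕ := af ends fun _ => 2

/-- `G` is `k`-degenerate: every (induced, nonempty) subgraph has a vertex of
degree at most `k`. -/
def Degenerate (ends : E → Sym2 V) (k : ℕ) : Prop :=
  ∀ S : Finset V, S.Nonempty → ∃ v ∈ S, degreeIn ends S v ≤ k

/-- An `f`-coloring: in each color class every vertex `v` has degree at most `f v`. -/
def FColoring (ends : E → Sym2 V) (f : V → ℕ) {k : ℕ} (C : E → Fin k) : Prop :=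
  ∀ c : Fin k, ∀ v, degree (subEnds ends fun e => C e = c) v ≤ f v

/-- The `f`-chromatic index `χ'_f(G)`. -/
def fChromaticIndex (ends : E → Sym2 V) (f : V → ℕ) : ℕ :=
  sInf {k | ∃ C : E → Fin k, FColoring ends f C}

/-- `G` is bipartite: the vertices can be split into two sides so that every
edge has one endpoint on each side. -/
def Bipartite (ends : E → Sym2 V) : Prop :=
  ∃ P : V → Prop, ∀ e : E, ∃ u v, ends e = s(u, v) ∧ P u ∧ ¬ P v

/-- The list analogue `χ'_{(g,h),ℓ}(G)`: the least `k` such that every list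
assignment with lists of size at least `k` admits a coloring from the lists in
which each color class is `(g,h)`-orientable. -/
def ghListChromaticIndex (ends : E → Sym2 V) (g h : V → ℕ∞) : ℕ :=
  sInf {k | ∀ L : E → Finset ℕ, (∀ e, k ≤ (L e).card) →
    ∃ C : E → ℕ, (∀ e, C e ∈ L e) ∧
      ∀ c : ℕ, GHOrientable (subEnds ends fun e => C e = c) g h}

/-- The list degree-`f` pseudoarboricity `pa_{f,ℓ}(G)`. -/
def pafList (ends : E → Sym2 V) (f : V → ℕ) : ℕ :=
  sInf {k | ∀ L : E → Finset ℕ, (∀ e, k ≤ (L e).card) →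
    ∃ C : E → ℕ, (∀ e, C e ∈ L e) ∧
      ∀ c : ℕ, IsPseudoforest (subEnds ends fun e => C e = c) ∧
        ∀ v, degree (subEnds ends fun e => C e = c) v ≤ f v}

/-- The list `f`-chromatic index `χ'_{f,ℓ}(G)`. -/
def fListChromaticIndex (ends : E → Sym2 V) (f : V → ℕ) : ℕ :=
  sInf {k | ∀ L : E → Finset ℕ, (∀ e, k ≤ (L e).card) →
    ∃ C : E → ℕ, (∀ e, C e ∈ L e) ∧
      ∀ c : ℕ, ∀ v, degree (subEnds ends fun e => C e = c) v ≤ f v}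

end MG

/-!
Both sides are governed by Hakimi's conditions `d(v) ≤ G(v) + H(v)`, `e(S) ≤ G(S)`,
`e(S) ≤ H(S)` for an orientation with indegrees at most `G` and outdegrees at most `H`;
truncating `∞` to `Δ(G)` changes nothing, as no indegree or outdegree exceeds `Δ(G)`.

A coloring with `k` colors adds up the conditions of its classes to those for `k g, k h`, which
by validity say exactly `max {Δ_{(g,h)}(G), W_{(g,h)}(G)} ≤ k`. Conversely, by Hakimi's theorem
these conditions give an orientation with indegrees at most `k g` and outdegrees at most `k h`,
and such an orientation splits into `k` classes with bounds `g, h`: one class is peeled off at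
a time by a Hakimi orientation of the bipartite tail-to-head multigraph. Hakimi's theorem itself
holds because walk reversals can decrease the total excess of an orientation over the bounds
until it vanishes.
-/

namespace MG

open Finset

section Counting

lemma card_filter_update_add {α β : Type*} [Fintype α] [DecidableEq α] [DecidableEq β]
    (f : α → β) (a : α) (b w : β) :
    #{x | Function.update f a b x = w} + (if f a = w then 1 else 0)
      = #{x | f x = w} + (if b = w then 1 else 0) := by
  simp only [card_filter, ← add_sum_erase _ _ (mem_univ a), Function.update_self]
  rw [sum_congr rfl fun x hx => by rw [Function.update_of_ne (ne_of_mem_erase hx)]]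
  ring

variable {E : Type} [Fintype E]

lemma card_filter_subtype (P : E → Prop) [DecidablePred P] (Q : E → Prop) [DecidablePred Q] :
    #{x : {e // P e} | Q x} = #{e | P e ∧ Q e} :=
  calc #{x : {e // P e} | Q x} = ∑ x : {e // P e}, if Q x then 1 else 0 := card_filter _ _
    _ = ∑ e ∈ univ.filter P, if Q e then 1 else 0 :=
      (sum_subtype _ (fun _ => by simp) fun e => if Q e then 1 else 0).symm
    _ = #{e | P e ∧ Q e} := by rw [← card_filter, filter_filter]

def addLastColor {k : ℕ} (P : E → Prop) (C : {e // ¬P e} → Fin k) (e : E) : Fin (k + 1) :=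
  if h : P e then Fin.last k else (C ⟨e, h⟩).castSucc

lemma card_addLastColor_last {k : ℕ} (P : E → Prop) (C : {e // ¬P e} → Fin k) (Q : E → Prop)
    [DecidablePred Q] :
    #{e | addLastColor P C e = Fin.last k ∧ Q e} = #{e | P e ∧ Q e} := by
  refine congrArg card (filter_congr fun e _ => and_congr_left' ?_)
  unfold addLastColor
  split_ifs with h
  · simp [h]
  · simp [h, (Fin.castSucc_lt_last _).ne]

lemma card_addLastColor_castSucc {k : ℕ} (P : E → Prop) (C : {e // ¬P e} → Fin k)
    (c : Fin k) (Q : E → Prop) [DecidablePred Q] :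
    #{e | addLastColor P C e = c.castSucc ∧ Q e} = #{x : {e // ¬P e} | C x = c ∧ Q x} := by
  symm
  refine card_bij (fun x _ => x.1) (fun x hx => ?_) (fun x _ y _ h => Subtype.ext h) ?_
  · simp only [mem_filter, mem_univ, true_and] at hx ⊢
    simpa [addLastColor, x.2] using hx
  · intro e he
    simp only [mem_filter, mem_univ, true_and] at he
    by_cases hP : P e
    · simp [addLastColor, hP, (Fin.castSucc_lt_last c).ne'] at he
    · exact ⟨⟨e, hP⟩, by simpa [addLastColor, hP] using he, rfl⟩

end Counting

section Orientation

variable {V E : Type} {ends : E → Sym2 V} {D : E → V × V}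

lemma IsOrientation.swap (hD : IsOrientation ends D) : IsOrientation ends (Prod.swap ∘ D) :=
  fun e => Sym2.eq_swap.trans (hD e)

lemma IsOrientation.mem_iff (hD : IsOrientation ends D) {e : E} {w : V} :
    w ∈ ends e ↔ w = (D e).1 ∨ w = (D e).2 := by
  rw [← hD e, Sym2.mem_iff]

variable [Fintype E] [DecidableEq V]

lemma IsOrientation.degree_eq (hD : IsOrientation ends D) (v : V) :
    degree ends v = inDeg D v + outDeg D v := by
  simp only [degree, inDeg, outDeg, card_filter, ← sum_add_distrib, ← hD _]
  exact sum_congr rfl fun e _ => add_comm _ _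

lemma sum_inDeg (D : E → V × V) (S : Finset V) :
    ∑ v ∈ S, inDeg D v = #{e | (D e).2 ∈ S} := by
  rw [card_eq_sum_card_fiberwise (f := fun e => (D e).2) (t := S) (fun e he => by simpa using he)]
  refine sum_congr rfl fun v hv => congrArg card ?_
  ext e
  simp +contextual [hv]

lemma inDeg_subtype (D : E → V × V) (P : E → Prop) [DecidablePred P] (v : V) :
    inDeg (fun x : {e // P e} => D x) v = #{e | P e ∧ (D e).2 = v} :=
  card_filter_subtype P fun e => (D e).2 = v

lemma outDeg_subtype (D : E → V × V) (P : E → Prop) [DecidablePred P] (v : V) :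
    outDeg (fun x : {e // P e} => D x) v = #{e | P e ∧ (D e).1 = v} :=
  card_filter_subtype P fun e => (D e).1 = v

lemma inDeg_update_add (D : E → V × V) (e : E) (p : V × V) (w : V) :
    inDeg (Function.update D e p) w + (if (D e).2 = w then 1 else 0)
      = inDeg D w + (if p.2 = w then 1 else 0) := by
  have := card_filter_update_add (Prod.snd ∘ D) e p.2 w
  rwa [← Function.comp_update] at this

lemma outDeg_update_add (D : E → V × V) (e : E) (p : V × V) (w : V) :
    outDeg (Function.update D e p) w + (if (D e).1 = w then 1 else 0)
      = outDeg D w + (if p.1 = w then 1 else 0) := by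
  have := inDeg_update_add (Prod.swap ∘ D) e p.swap w
  rwa [← Function.comp_update] at this

lemma degree_subEnds_le (P : E → Prop) [DecidablePred P] (v : V) :
    degree (subEnds ends P) v ≤ degree ends v :=
  calc degree (subEnds ends P) v = ∑ e ∈ univ.filter P, mult v (ends e) :=
        (sum_subtype (univ.filter P) (fun _ => by simp) fun e => mult v (ends e)).symm
    _ ≤ degree ends v := sum_le_sum_of_subset (filter_subset _ _)

lemma degree_eq_sum_subEnds {j : ℕ} (C : E → Fin j) (v : V) :
    degree ends v = ∑ c, degree (subEnds ends fun e => C e = c) v :=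
  (Fintype.sum_fiberwise C fun e => mult v (ends e)).symm

variable [Fintype V]

lemma degree_le_maxDegree (ends : E → Sym2 V) (v : V) : degree ends v ≤ maxDegree ends :=
  le_sup (f := fun v => degree ends v) (mem_univ v)

lemma maxDegree_pos_of_ends_eq {e : E} {x y : V} (hxy : ends e = s(x, y)) : 0 < maxDegree ends :=
  calc 0 < mult x (ends e) := by simp [hxy, mult]
    _ ≤ degree ends x := single_le_sum (f := fun e => mult x (ends e)) (by simp) (mem_univ e)
    _ ≤ maxDegree ends := degree_le_maxDegree ends x

lemma edgesWithin_eq_sum_subEnds {j : ℕ} (C : E → Fin j) (S : Finset V) :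
    edgesWithin ends S = ∑ c, edgesWithin (subEnds ends fun e => C e = c) S := by
  rw [edgesWithin, card_filter, ← Fintype.sum_fiberwise C]
  exact sum_congr rfl fun c _ => (card_filter _ _).symm

lemma IsOrientation.edgesWithin_le_sum_inDeg (hD : IsOrientation ends D) (S : Finset V) :
    edgesWithin ends S ≤ ∑ v ∈ S, inDeg D v :=
  (sum_inDeg D S).symm ▸ card_le_card
    (monotone_filter_right _ fun _ _ he => he _ (hD.mem_iff.2 (Or.inr rfl)))

/-- Hakimi's conditions, which characterize the multigraphs having an orientation with
indegrees at most `G` and outdegrees at most `H`. -/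
structure HakimiCondition (ends : E → Sym2 V) (G H : V → ℕ) : Prop where
  degree_le : ∀ v, degree ends v ≤ G v + H v
  edgesWithin_le_left : ∀ S, edgesWithin ends S ≤ ∑ v ∈ S, G v
  edgesWithin_le_right : ∀ S, edgesWithin ends S ≤ ∑ v ∈ S, H v

lemma HakimiCondition.swap {G H : V → ℕ} (h : HakimiCondition ends G H) :
    HakimiCondition ends H G :=
  ⟨fun v => (h.degree_le v).trans_eq (add_comm _ _), h.edgesWithin_le_right,
    h.edgesWithin_le_left⟩

lemma HakimiCondition.mono {G H G' H' : V → ℕ} (h : HakimiCondition ends G H)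
    (hG : G ≤ G') (hH : H ≤ H') : HakimiCondition ends G' H' :=
  ⟨fun v => (h.degree_le v).trans (add_le_add (hG v) (hH v)),
    fun S => (h.edgesWithin_le_left S).trans (sum_le_sum fun v _ => hG v),
    fun S => (h.edgesWithin_le_right S).trans (sum_le_sum fun v _ => hH v)⟩

lemma IsOrientation.hakimiCondition (hD : IsOrientation ends D) :
    HakimiCondition ends (inDeg D) (outDeg D) :=
  ⟨fun v => (hD.degree_eq v).le, hD.edgesWithin_le_sum_inDeg,
    hD.swap.edgesWithin_le_sum_inDeg⟩

lemma HakimiCondition.of_coloring {j : ℕ} (C : E → Fin j) {G H : V → ℕ}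
    (hC : ∀ c, HakimiCondition (subEnds ends fun e => C e = c) G H) :
    HakimiCondition ends (fun v => j * G v) (fun v => j * H v) := by
  refine ⟨fun v => ?_, fun S => ?_, fun S => ?_⟩
  · rw [degree_eq_sum_subEnds C, ← mul_add]
    simpa using sum_le_sum fun c (_ : c ∈ univ) => (hC c).degree_le v
  · rw [edgesWithin_eq_sum_subEnds C, ← mul_sum]
    simpa using sum_le_sum fun c (_ : c ∈ univ) => (hC c).edgesWithin_le_left S
  · rw [edgesWithin_eq_sum_subEnds C, ← mul_sum]
    simpa using sum_le_sum fun c (_ : c ∈ univ) => (hC c).edgesWithin_le_right S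

end Orientation

section Walk

variable {V E : Type} {ends : E → Sym2 V} {D : E → V × V}

def IsWalk (D : E → V × V) : List E → V → V → Prop
  | [], u, v => u = v
  | e :: l, u, v => (D e).1 = u ∧ IsWalk D l (D e).2 v

lemma IsWalk.of_append {l₁ l₂ : List E} {u v : V} (h : IsWalk D (l₁ ++ l₂) u v) :
    ∃ w, IsWalk D l₂ w v := by
  induction l₁ generalizing u with
  | nil => exact ⟨u, h⟩
  | cons e l ih => exact ih h.2

lemma IsWalk.update {l : List E} {u v : V} {e : E} (hel : e ∉ l) (p : V × V)
    (h : IsWalk D l u v) : IsWalk (Function.update D e p) l u v := by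
  induction l generalizing u with
  | nil => exact h
  | cons f l ih =>
    rw [List.mem_cons, not_or] at hel
    rw [IsWalk, Function.update_of_ne (Ne.symm hel.1)]
    exact ⟨h.1, ih hel.2 h.2⟩

variable [Fintype E] [DecidableEq V]

/-- The arcs are reversed one at a time; when the first arc recurs later in the walk, the walk
is first shortcut to that later occurrence. -/
theorem IsWalk.exists_reverse {D : E → V × V} (hD : IsOrientation ends D) {l : List E} {u v : V}
    (hl : IsWalk D l u v) :
    ∃ D', IsOrientation ends D' ∧ ∀ w,
      inDeg D' w + (if v = w then 1 else 0) = inDeg D w + (if u = w then 1 else 0) ∧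
      outDeg D' w + (if u = w then 1 else 0) = outDeg D w + (if v = w then 1 else 0) := by
  match l, hl with
  | [], (huv : u = v) => exact ⟨D, hD, fun w => by subst huv; simp⟩
  | e :: l, ⟨he, hl⟩ =>
    by_cases hel : e ∈ l
    · obtain ⟨l₁, l₂, rfl⟩ := List.append_of_mem hel
      obtain ⟨w, hw⟩ := hl.of_append
      obtain rfl : w = u := hw.1.symm.trans he
      exact hw.exists_reverse hD
    · have hD₁ : IsOrientation ends (Function.update D e (D e).swap) := by
        intro f
        rcases eq_or_ne f e with rfl | hf
        · simpa using hD.swap f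
        · rw [Function.update_of_ne hf]
          exact hD f
      obtain ⟨D', hD', hdeg⟩ := (hl.update hel (D e).swap).exists_reverse hD₁
      refine ⟨D', hD', fun w => ?_⟩
      have h₁ := hdeg w
      have h₂ := inDeg_update_add D e (D e).swap w
      have h₃ := outDeg_update_add D e (D e).swap w
      simp only [Prod.fst_swap, Prod.snd_swap, he] at h₂ h₃
      constructor <;> omega
termination_by l.length

end Walk

section Hakimi

variable {V E : Type} [Fintype V] [Fintype E] [DecidableEq V] {ends : E → Sym2 V}
  {D : E → V × V} {G H : V → ℕ}

def excess (D : E → V × V) (G H : V → ℕ) : ℕ :=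
  ∑ v, ((inDeg D v - G v) + (outDeg D v - H v))

lemma excess_swap (D : E → V × V) (G H : V → ℕ) : excess (Prod.swap ∘ D) H G = excess D G H :=
  sum_congr rfl fun _ _ => add_comm _ _

lemma excess_eq_zero_iff :
    excess D G H = 0 ↔ (∀ v, inDeg D v ≤ G v) ∧ ∀ v, outDeg D v ≤ H v := by
  simp [excess, sum_eq_zero_iff, forall_and, Nat.sub_eq_zero_iff_le]

/-- The vertices from which `v` can be reached span all arcs entering them. -/
lemma HakimiCondition.exists_walk_of_lt_inDeg (hH : HakimiCondition ends G H)
    (hD : IsOrientation ends D) {v : V} (hv : G v < inDeg D v) :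
    ∃ u l, IsWalk D l u v ∧ inDeg D u < G u := by
  set R : Finset V := {u | ∃ l, IsWalk D l u v}
  have hvR : v ∈ R := by simpa [R] using ⟨[], rfl⟩
  have hR : ∀ e, (D e).2 ∈ R → (D e).1 ∈ R := by
    simp only [R, mem_filter, mem_univ, true_and]
    exact fun e ⟨l, hl⟩ => ⟨e :: l, rfl, hl⟩
  have hsum : ∑ u ∈ R, inDeg D u ≤ ∑ u ∈ R, G u := by
    refine le_trans ?_ (hH.edgesWithin_le_left R)
    rw [sum_inDeg]
    refine card_le_card (monotone_filter_right _ fun e _ he w hw => ?_)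
    rcases hD.mem_iff.1 hw with rfl | rfl
    exacts [hR e he, he]
  obtain ⟨u, huR, hu⟩ : ∃ u ∈ R, inDeg D u < G u := by
    by_contra! h
    exact (sum_lt_sum h ⟨v, hvR, hv⟩).not_ge hsum
  obtain ⟨l, hl⟩ := (mem_filter.1 huR).2
  exact ⟨u, l, hl, hu⟩

lemma HakimiCondition.exists_excess_lt (hH : HakimiCondition ends G H)
    (hD : IsOrientation ends D) {v : V} (hv : G v < inDeg D v) :
    ∃ D', IsOrientation ends D' ∧ excess D' G H < excess D G H := by
  obtain ⟨u, l, hl, hu⟩ := hH.exists_walk_of_lt_inDeg hD hv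
  obtain ⟨D', hD', hdeg⟩ := hl.exists_reverse hD
  have huv : u ≠ v := by rintro rfl; omega
  have hdv := hH.degree_le v
  rw [hD.degree_eq] at hdv
  refine ⟨D', hD', sum_lt_sum (fun w _ => ?_) ⟨v, mem_univ v, ?_⟩⟩
  · obtain ⟨h₁, h₂⟩ := hdeg w
    rcases eq_or_ne u w with rfl | hwu
    · simp only [huv.symm, if_true, if_false] at h₁ h₂
      omega
    rcases eq_or_ne v w with rfl | hwv
    · simp only [hwu, if_true, if_false] at h₁ h₂
      omega
    simp only [hwu, hwv, if_false] at h₁ h₂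
    omega
  · obtain ⟨h₁, h₂⟩ := hdeg v
    simp only [huv, if_true, if_false] at h₁ h₂
    omega

theorem HakimiCondition.exists_orientation (hH : HakimiCondition ends G H) :
    ∃ D, IsOrientation ends D ∧ (∀ v, inDeg D v ≤ G v) ∧ ∀ v, outDeg D v ≤ H v := by
  have : Nonempty {D : E → V × V // IsOrientation ends D} :=
    ⟨⟨fun e => (ends e).out, fun e => Quot.out_eq _⟩⟩
  obtain ⟨⟨D, hD⟩, hmin⟩ :=
    Finite.exists_min fun D : {D // IsOrientation ends D} => excess D.1 G H
  refine ⟨D, hD, excess_eq_zero_iff.1 (by_contra fun hpos => ?_)⟩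
  obtain ⟨v, hv | hv⟩ : ∃ v, G v < inDeg D v ∨ H v < outDeg D v := by
    by_contra! h
    exact hpos (excess_eq_zero_iff.2 ⟨fun v => (h v).1, fun v => (h v).2⟩)
  · obtain ⟨D', hD', hlt⟩ := hH.exists_excess_lt hD hv
    exact (hmin ⟨D', hD'⟩).not_gt hlt
  · obtain ⟨D', hD', hlt⟩ := hH.swap.exists_excess_lt hD.swap hv
    exact (hmin ⟨_, hD'.swap⟩).not_gt
      ((excess_swap D' H G).trans_lt (hlt.trans_eq (excess_swap D G H)))

end Hakimi

section Split

variable {V E : Type} [Fintype V] [Fintype E] [DecidableEq V]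

lemma le_mul_add_of_le_succ_mul {x p q k : ℕ} (hp : x ≤ (k + 1) * p) (hq : x ≤ (k + 1) * q) :
    x ≤ k * p + q :=
  Nat.le_of_mul_le_mul_left (by nlinarith) k.succ_pos

def tailToHead (D : E → V × V) (e : E) : (V ⊕ V) × (V ⊕ V) := (.inl (D e).1, .inr (D e).2)

lemma hakimiCondition_tailToHead {D : E → V × V} {a b : V → ℕ} {k : ℕ}
    (hin : ∀ v, inDeg D v ≤ (k + 1) * a v) (hout : ∀ v, outDeg D v ≤ (k + 1) * b v) :
    HakimiCondition (fun e => s(.inl (D e).1, .inr (D e).2))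
      (Sum.elim (k * b ·) a) (Sum.elim b (k * a ·)) := by
  have hT : IsOrientation (fun e => s(.inl (D e).1, .inr (D e).2)) (tailToHead D) :=
    fun _ => rfl
  have hinT : ∀ v, inDeg (tailToHead D) (.inl v) = 0 ∧
      inDeg (tailToHead D) (.inr v) = inDeg D v := by
    simp [inDeg, tailToHead]
  have houtT : ∀ v, outDeg (tailToHead D) (.inl v) = outDeg D v ∧
      outDeg (tailToHead D) (.inr v) = 0 := by
    simp [outDeg, tailToHead]
  have hL : ∀ S, edgesWithin _ S ≤ (k + 1) * ∑ v ∈ S.toLeft, b v := fun S => by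
    refine (hT.hakimiCondition.edgesWithin_le_right S).trans ?_
    simp only [sum_sum_eq_sum_toLeft_add_sum_toRight, houtT, sum_const_zero, add_zero, mul_sum]
    exact sum_le_sum fun v _ => hout v
  have hR : ∀ S, edgesWithin _ S ≤ (k + 1) * ∑ v ∈ S.toRight, a v := fun S => by
    refine (hT.hakimiCondition.edgesWithin_le_left S).trans ?_
    simp only [sum_sum_eq_sum_toLeft_add_sum_toRight, hinT, sum_const_zero, zero_add, mul_sum]
    exact sum_le_sum fun v _ => hin v
  refine ⟨fun s => ?_, fun S => ?_, fun S => ?_⟩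
  · rw [hT.degree_eq]
    rcases s with v | v
    · simp only [hinT, houtT, Sum.elim_inl]
      linarith [hout v]
    · simp only [hinT, houtT, Sum.elim_inr]
      linarith [hin v]
  · simp only [sum_sum_eq_sum_toLeft_add_sum_toRight, Sum.elim_inl, Sum.elim_inr, ← mul_sum]
    exact le_mul_add_of_le_succ_mul (hL S) (hR S)
  · simp only [sum_sum_eq_sum_toLeft_add_sum_toRight, Sum.elim_inl, Sum.elim_inr, ← mul_sum]
    rw [add_comm]
    exact le_mul_add_of_le_succ_mul (hR S) (hL S)

/-- The new class consists of the arcs whose edges a Hakimi orientation of the tail-to-head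
multigraph directs from left to right. -/
lemma exists_peel (D : E → V × V) (a b : V → ℕ) (k : ℕ)
    (hin : ∀ v, inDeg D v ≤ (k + 1) * a v) (hout : ∀ v, outDeg D v ≤ (k + 1) * b v) :
    ∃ P : E → Prop,
      (∀ v, #{e | P e ∧ (D e).2 = v} ≤ a v ∧ #{e | P e ∧ (D e).1 = v} ≤ b v) ∧
      ∀ v, #{e | ¬P e ∧ (D e).2 = v} ≤ k * a v ∧ #{e | ¬P e ∧ (D e).1 = v} ≤ k * b v := by
  obtain ⟨D', hD', hin', hout'⟩ := (hakimiCondition_tailToHead hin hout).exists_orientation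
  have hdir : ∀ e, D' e = tailToHead D e ∨ D' e = (tailToHead D e).swap := fun e => by
    have := hD' e
    rw [Sym2.eq_iff] at this
    rcases this with ⟨h₁, h₂⟩ | ⟨h₁, h₂⟩
    exacts [.inl (Prod.ext h₁ h₂), .inr (Prod.ext h₁ h₂)]
  refine ⟨fun e => D' e = tailToHead D e, fun v => ⟨?_, ?_⟩, fun v => ⟨?_, ?_⟩⟩
  · refine le_trans (card_le_card fun e he => ?_) (hin' (.inr v))
    simp only [mem_filter, mem_univ, true_and] at he ⊢
    rw [he.1, ← he.2]
    rfl
  · refine le_trans (card_le_card fun e he => ?_) (hout' (.inl v))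
    simp only [mem_filter, mem_univ, true_and] at he ⊢
    rw [he.1, ← he.2]
    rfl
  · refine le_trans (card_le_card fun e he => ?_) (hout' (.inr v))
    simp only [mem_filter, mem_univ, true_and] at he ⊢
    rw [(hdir e).resolve_left he.1, ← he.2]
    rfl
  · refine le_trans (card_le_card fun e he => ?_) (hin' (.inl v))
    simp only [mem_filter, mem_univ, true_and] at he ⊢
    rw [(hdir e).resolve_left he.1, ← he.2]
    rfl

theorem exists_coloring_of_le_mul (D : E → V × V) (a b : V → ℕ) (k : ℕ)
    (hin : ∀ v, inDeg D v ≤ k * a v) (hout : ∀ v, outDeg D v ≤ k * b v) :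
    ∃ C : E → Fin k, ∀ c v,
      #{e | C e = c ∧ (D e).2 = v} ≤ a v ∧ #{e | C e = c ∧ (D e).1 = v} ≤ b v := by
  induction k generalizing E with
  | zero =>
    have : IsEmpty E := ⟨fun e => by
      have := hin (D e).2
      simp only [inDeg, zero_mul, Nat.le_zero, card_eq_zero, filter_eq_empty_iff] at this
      exact this (mem_univ e) rfl⟩
    exact ⟨isEmptyElim, fun c => c.elim0⟩
  | succ k ih =>
    obtain ⟨P, hP, hnP⟩ := exists_peel D a b k hin hout
    obtain ⟨C, hC⟩ := ih (fun x : {e // ¬P e} => D x)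
      (fun v => (inDeg_subtype D _ v).trans_le (hnP v).1)
      (fun v => (outDeg_subtype D _ v).trans_le (hnP v).2)
    refine ⟨addLastColor P C, fun c v => ?_⟩
    induction c using Fin.lastCases with
    | last => simpa only [card_addLastColor_last] using hP v
    | cast c => simpa only [card_addLastColor_castSucc] using hC c v

end Split

section Coloring

variable {V E : Type} [Fintype V] [Fintype E] [DecidableEq V] {ends : E → Sym2 V} {g h : V → ℕ∞}

lemma coe_le_of_le_trunc {n : ℕ} {v : V} (hn : n ≤ trunc ends g v) : (n : ℕ∞) ≤ g v := by
  unfold trunc at hn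
  generalize g v = x at hn ⊢
  cases x with
  | top => exact le_top
  | coe m => exact_mod_cast hn

lemma le_trunc_iff {n : ℕ} {v : V} (hn : n ≤ maxDegree ends) :
    n ≤ trunc ends g v ↔ (n : ℕ∞) ≤ g v := by
  refine ⟨coe_le_of_le_trunc, fun hg => ?_⟩
  unfold trunc
  generalize g v = x at hg ⊢
  cases x with
  | top => exact hn
  | coe m => exact_mod_cast hg

lemma GHOrientable.hakimiCondition_trunc {P : E → Prop} [DecidablePred P]
    (hgh : GHOrientable (subEnds ends P) g h) :
    HakimiCondition (subEnds ends P) (trunc ends g) (trunc ends h) := by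
  obtain ⟨D, hD, hin, hout⟩ := hgh
  have hdeg : ∀ v, inDeg D v + outDeg D v ≤ maxDegree ends := fun v =>
    (hD.degree_eq v).symm.trans_le
      ((degree_subEnds_le P v).trans (degree_le_maxDegree ends v))
  exact hD.hakimiCondition.mono
    (fun v => (le_trunc_iff (by linarith [hdeg v])).2 (hin v))
    (fun v => (le_trunc_iff (by linarith [hdeg v])).2 (hout v))

theorem exists_ghColoring_iff (j : ℕ) :
    (∃ C : E → Fin j, GHColoring ends g h C) ↔
      HakimiCondition ends (fun v => j * trunc ends g v) (fun v => j * trunc ends h v) := by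
  refine ⟨fun ⟨C, hC⟩ => .of_coloring C fun c => (hC c).hakimiCondition_trunc, fun hH => ?_⟩
  obtain ⟨D, hD, hin, hout⟩ := hH.exists_orientation
  obtain ⟨C, hC⟩ := exists_coloring_of_le_mul D _ _ j hin hout
  refine ⟨C, fun c => ⟨fun x => D x, fun x => hD x, fun v => ?_, fun v => ?_⟩⟩
  · rw [inDeg_subtype]
    exact coe_le_of_le_trunc (hC c v).1
  · rw [outDeg_subtype]
    exact coe_le_of_le_trunc (hC c v).2

lemma cdiv_le_of_le_mul {a b j : ℕ} (h : a ≤ j * b) : cdiv a b ≤ j := by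
  rcases b.eq_zero_or_pos with rfl | hb
  · simp [cdiv]
  · exact (ceilDiv_le_iff_le_mul hb).2 (mul_comm j b ▸ h)

lemma le_mul_of_cdiv_le {a b j : ℕ} (hb : 0 < b) (h : cdiv a b ≤ j) : a ≤ j * b :=
  mul_comm b j ▸ (ceilDiv_le_iff_le_mul hb).1 h

lemma one_le_or_one_le_of_one_le_add {a b : ℕ∞} (h : 1 ≤ a + b) : 1 ≤ a ∨ 1 ≤ b := by
  simp only [Order.one_le_iff_ne_zero] at h ⊢
  by_contra! hab
  simp [hab.1, hab.2] at h

lemma ghMaxDegree_le_iff (hgh : ∀ v, 1 ≤ g v + h v) (j : ℕ) :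
    ghMaxDegree ends g h ≤ j ↔
      ∀ v, degree ends v ≤ j * trunc ends g v + j * trunc ends h v := by
  simp only [ghMaxDegree, Finset.sup_le_iff, mem_univ, true_imp_iff, ← mul_add]
  refine forall_congr' fun v => ⟨fun hv => ?_, cdiv_le_of_le_mul⟩
  rcases (degree ends v).eq_zero_or_pos with h0 | hpos
  · simp [h0]
  have hΔ := hpos.trans_le (degree_le_maxDegree ends v)
  refine le_mul_of_cdiv_le ?_ hv
  rcases one_le_or_one_le_of_one_le_add (hgh v) with hg | hh
  · exact add_pos_of_pos_of_nonneg ((le_trunc_iff hΔ).2 hg) (Nat.zero_le _)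
  · exact add_pos_of_nonneg_of_pos (Nat.zero_le _) ((le_trunc_iff hΔ).2 hh)

lemma one_le_sum_of_edgesWithin_pos {f : V → ℕ∞} (hf : ∀ u v, Adj ends u v → 1 ≤ f u + f v)
    {S : Finset V} (hS : 0 < edgesWithin ends S) :
    1 ≤ ∑ v ∈ S, f v ∧ 1 ≤ ∑ v ∈ S, trunc ends f v := by
  obtain ⟨e, he⟩ := card_pos.1 hS
  simp only [mem_filter, mem_univ, true_and] at he
  induction hxy : ends e using Sym2.ind with
  | h x y =>
    rw [hxy] at he
    have hΔ := maxDegree_pos_of_ends_eq hxy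
    obtain ⟨w, hwS, hw⟩ : ∃ w ∈ S, 1 ≤ f w :=
      (one_le_or_one_le_of_one_le_add (hf x y ⟨e, hxy⟩)).elim
        (⟨x, he x (Sym2.mem_mk_left x y), ·⟩) (⟨y, he y (Sym2.mem_mk_right x y), ·⟩)
    exact ⟨hw.trans (single_le_sum (fun _ _ => zero_le) hwS),
      ((le_trunc_iff hΔ).2 hw).trans (single_le_sum (fun _ _ => Nat.zero_le _) hwS)⟩

lemma ghMaxDensity_le_iff (hg : ∀ u v, Adj ends u v → 1 ≤ g u + g v)
    (hh : ∀ u v, Adj ends u v → 1 ≤ h u + h v) (j : ℕ) :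
    ghMaxDensity ends g h ≤ j ↔ ∀ S, edgesWithin ends S ≤ ∑ v ∈ S, j * trunc ends g v ∧
      edgesWithin ends S ≤ ∑ v ∈ S, j * trunc ends h v := by
  simp only [ghMaxDensity, Finset.sup_le_iff, mem_filter, mem_univ, true_and, ← mul_sum]
  refine ⟨fun hW S => ?_, fun hW S _ => cdiv_le_of_le_mul (mul_min j _ _ ▸ le_min_iff.2 (hW S))⟩
  rcases (edgesWithin ends S).eq_zero_or_pos with h0 | hpos
  · simp [h0]
  obtain ⟨hgS, htgS⟩ := one_le_sum_of_edgesWithin_pos hg hpos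
  obtain ⟨hhS, hthS⟩ := one_le_sum_of_edgesWithin_pos hh hpos
  exact le_min_iff.1 (mul_min j _ _ ▸ le_mul_of_cdiv_le (lt_min htgS hthS) (hW S ⟨hgS, hhS⟩))

lemma max_le_iff_hakimiCondition (hgh : ValidPair ends g h) (j : ℕ) :
    max (ghMaxDegree ends g h) (ghMaxDensity ends g h) ≤ j ↔
      HakimiCondition ends (fun v => j * trunc ends g v) (fun v => j * trunc ends h v) := by
  rw [max_le_iff, ghMaxDegree_le_iff hgh.1, ghMaxDensity_le_iff hgh.2.1 hgh.2.2]
  exact ⟨fun ⟨hd, hS⟩ => ⟨hd, fun S => (hS S).1, fun S => (hS S).2⟩,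
    fun hH => ⟨hH.degree_le, fun S => ⟨hH.edgesWithin_le_left S, hH.edgesWithin_le_right S⟩⟩⟩

end Coloring

/-- Theorem 1.2, oriented Goldberg–Seymour: for every multigraph `G`
and valid pair of functions `(g,h)`,
`χ'_{(g,h)}(G) = max {Δ_{(g,h)}(G), W_{(g,h)}(G)}`. -/
theorem oriented_goldberg_seymour {V E : Type} [Fintype V] [Fintype E] [DecidableEq V]
    (ends : E → Sym2 V) (g h : V → ℕ∞) (hgh : ValidPair ends g h) :
    ghChromaticIndex ends g h = max (ghMaxDegree ends g h) (ghMaxDensity ends g h) := by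
  have hcol : {k | ∃ C : E → Fin k, GHColoring ends g h C} =
      Set.Ici (max (ghMaxDegree ends g h) (ghMaxDensity ends g h)) :=
    Set.ext fun j => (exists_ghColoring_iff j).trans (max_le_iff_hakimiCondition hgh j).symm
  rw [ghChromaticIndex, hcol, csInf_Ici]

end MG
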